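/- β-reduction and commuting-conversion reduction commute: if t ⇝_β* u and t ⇝_cc* u', then there exists a term v such that u ⇝_cc* v and u' ⇝_β* v. -/

import Mathlib

namespace STLCp

/-- Types of the simply-typed λ-calculus with sums, over base types `B`. -/
inductive Ty (B : Type) : Type
  | base : B → Ty B
  | unit : Ty B
  | empty : Ty B
  | prod : Ty B → Ty B → Ty B
  | sum : Ty B → Ty B → Ty B
  | arr : Ty B → Ty B → Ty B

/-- Terms (de Bruijn style) over a set of constants `C`. -/
inductive Tm (C : Type) : Type
  | cst : C → Tm C
  | var : Nat → Tm C
  | star : Tm C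
  | pair : Tm C → Tm C → Tm C
  | proj1 : Tm C → Tm C
  | proj2 : Tm C → Tm C
  | lam : Tm C → Tm C
  | app : Tm C → Tm C → Tm C
  | inl : Tm C → Tm C
  | inr : Tm C → Tm C
  | raise : Tm C → Tm C
  | case : Tm C → Tm C → Tm C → Tm C

variable {B C : Type}

/-- Lifting a renaming under a binder. -/
def liftRen (ρ : Nat → Nat) : Nat → Nat
  | 0 => 0
  | n + 1 => ρ n + 1

/-- Action of renamings on terms. -/
def rename (ρ : Nat → Nat) : Tm C → Tm C
  | .cst c => .cst c
  | .var n => .var (ρ n)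
  | .star => .star
  | .pair t u => .pair (rename ρ t) (rename ρ u)
  | .proj1 t => .proj1 (rename ρ t)
  | .proj2 t => .proj2 (rename ρ t)
  | .lam t => .lam (rename (liftRen ρ) t)
  | .app t u => .app (rename ρ t) (rename ρ u)
  | .inl t => .inl (rename ρ t)
  | .inr t => .inr (rename ρ t)
  | .raise t => .raise (rename ρ t)
  | .case s bl br => .case (rename ρ s) (rename (liftRen ρ) bl) (rename (liftRen ρ) br)

/-- Lifting a parallel substitution under a binder. -/
def liftSub (σ : Nat → Tm C) : Nat → Tm C
  | 0 => .var 0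
  | n + 1 => rename Nat.succ (σ n)

/-- Action of parallel substitutions on terms, `t[σ]`. -/
def subst (σ : Nat → Tm C) : Tm C → Tm C
  | .cst c => .cst c
  | .var n => σ n
  | .star => .star
  | .pair t u => .pair (subst σ t) (subst σ u)
  | .proj1 t => .proj1 (subst σ t)
  | .proj2 t => .proj2 (subst σ t)
  | .lam t => .lam (subst (liftSub σ) t)
  | .app t u => .app (subst σ t) (subst σ u)
  | .inl t => .inl (subst σ t)
  | .inr t => .inr (subst σ t)
  | .raise t => .raise (subst σ t)
  | .case s bl br => .case (subst σ s) (subst (liftSub σ) bl) (subst (liftSub σ) br)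

/-- The substitution `u..`: maps the last variable to `u`, the identity elsewhere. -/
def sub0 (u : Tm C) : Nat → Tm C
  | 0 => u
  | n + 1 => .var n

/-- Eliminations: application, projections and case analysis. -/
inductive Elim (C : Type) : Type
  | eapp : Tm C → Elim C
  | eproj1 : Elim C
  | eproj2 : Elim C
  | ecase : Tm C → Tm C → Elim C

/-- Plugging a term into an elimination, `e[t]`. -/
def plug : Elim C → Tm C → Tm C
  | .eapp u, t => .app t u
  | .eproj1, t => .proj1 t
  | .eproj2, t => .proj2 t
  | .ecase bl br, t => .case t bl br

/-- Weakening the contents of an elimination (used when pushing it under a binder). -/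
def weakenElim : Elim C → Elim C
  | .eapp u => .eapp (rename Nat.succ u)
  | .eproj1 => .eproj1
  | .eproj2 => .eproj2
  | .ecase bl br => .ecase (rename (liftRen Nat.succ) bl) (rename (liftRen Nat.succ) br)

/-- The β-rules. -/
inductive BetaBase : Tm C → Tm C → Prop
  | proj1 (t u : Tm C) : BetaBase (.proj1 (.pair t u)) t
  | proj2 (t u : Tm C) : BetaBase (.proj2 (.pair t u)) u
  | app (t u : Tm C) : BetaBase (.app (.lam t) u) (subst (sub0 u) t)
  | case_inl (a bl br : Tm C) : BetaBase (.case (.inl a) bl br) (subst (sub0 a) bl)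
  | case_inr (b bl br : Tm C) : BetaBase (.case (.inr b) bl br) (subst (sub0 b) br)

/-- The commuting-conversion rules. -/
inductive CCBase : Tm C → Tm C → Prop
  | raise (e : Elim C) (t : Tm C) : CCBase (plug e (.raise t)) (.raise t)
  | case (e : Elim C) (s bl br : Tm C) :
      CCBase (plug e (.case s bl br))
        (.case s (plug (weakenElim e) bl) (plug (weakenElim e) br))

/-- Congruence closure of a base relation on terms. -/
inductive Cong (R : Tm C → Tm C → Prop) : Tm C → Tm C → Prop
  | base : R t u → Cong R t u
  | pairL : Cong R t t' → Cong R (.pair t u) (.pair t' u)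
  | pairR : Cong R u u' → Cong R (.pair t u) (.pair t u')
  | proj1 : Cong R t t' → Cong R (.proj1 t) (.proj1 t')
  | proj2 : Cong R t t' → Cong R (.proj2 t) (.proj2 t')
  | lam : Cong R t t' → Cong R (.lam t) (.lam t')
  | appL : Cong R t t' → Cong R (.app t u) (.app t' u)
  | appR : Cong R u u' → Cong R (.app t u) (.app t u')
  | inl : Cong R t t' → Cong R (.inl t) (.inl t')
  | inr : Cong R t t' → Cong R (.inr t) (.inr t')
  | raise : Cong R t t' → Cong R (.raise t) (.raise t')
  | caseS : Cong R s s' → Cong R (.case s bl br) (.case s' bl br)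
  | caseL : Cong R bl bl' → Cong R (.case s bl br) (.case s bl' br)
  | caseR : Cong R br br' → Cong R (.case s bl br) (.case s bl br')

/-- One-step β-reduction. -/
def StepBeta : Tm C → Tm C → Prop := Cong BetaBase

/-- One-step commuting-conversion reduction. -/
def StepCC : Tm C → Tm C → Prop := Cong CCBase

/-- One-step reduction (β-rules together with commuting conversions). -/
def Step : Tm C → Tm C → Prop := Cong (fun t u => BetaBase t u ∨ CCBase t u)

/-- Reflexive-transitive closures. -/
def RedsBeta : Tm C → Tm C → Prop := Relation.ReflTransGen StepBeta
def RedsCC : Tm C → Tm C → Prop := Relation.ReflTransGen StepCC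
def Reds : Tm C → Tm C → Prop := Relation.ReflTransGen Step

/-- Typing judgment `Γ ⊢ t : A` over a language given by `tyof : C → Ty B`.
Contexts are lists of types, the head being the last-bound variable. -/
inductive HasType (tyof : C → Ty B) : List (Ty B) → Tm C → Ty B → Prop
  | cst (Γ) (c : C) : HasType tyof Γ (.cst c) (tyof c)
  | var : Γ[n]? = some A → HasType tyof Γ (.var n) A
  | star : HasType tyof Γ .star .unit
  | pair : HasType tyof Γ t A → HasType tyof Γ u A' →
      HasType tyof Γ (.pair t u) (.prod A A')
  | proj1 : HasType tyof Γ p (.prod A A') → HasType tyof Γ (.proj1 p) A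
  | proj2 : HasType tyof Γ p (.prod A A') → HasType tyof Γ (.proj2 p) A'
  | lam : HasType tyof (A :: Γ) t A' → HasType tyof Γ (.lam t) (.arr A A')
  | app : HasType tyof Γ t (.arr A A') → HasType tyof Γ u A →
      HasType tyof Γ (.app t u) A'
  | raise : HasType tyof Γ t .empty → HasType tyof Γ (.raise t) A
  | inl : HasType tyof Γ a A → HasType tyof Γ (.inl a) (.sum A A')
  | inr : HasType tyof Γ b A' → HasType tyof Γ (.inr b) (.sum A A')
  | case : HasType tyof Γ s (.sum A A') → HasType tyof (A :: Γ) bl T →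
      HasType tyof (A' :: Γ) br T → HasType tyof Γ (.case s bl br) T

mutual
  /-- Bidirectional checking judgment `Γ ⊢ t ⇐ A` (normal forms). -/
  inductive Check (tyof : C → Ty B) : List (Ty B) → Tm C → Ty B → Prop
    | star : Check tyof Γ .star .unit
    | pair : Check tyof Γ t A → Check tyof Γ u A' →
        Check tyof Γ (.pair t u) (.prod A A')
    | lam : Check tyof (A :: Γ) t A' → Check tyof Γ (.lam t) (.arr A A')
    | inl : Check tyof Γ a A → Check tyof Γ (.inl a) (.sum A A')
    | inr : Check tyof Γ b A' → Check tyof Γ (.inr b) (.sum A A')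
    | demote : Infer tyof Γ t A → A = A' → Check tyof Γ t A'
    | raise : Infer tyof Γ t .empty → Check tyof Γ (.raise t) A
    | case : Infer tyof Γ s (.sum A A') → Check tyof (A :: Γ) bl T →
        Check tyof (A' :: Γ) br T → Check tyof Γ (.case s bl br) T

  /-- Bidirectional inference judgment `Γ ⊢ t ⇒ A` (neutral forms). -/
  inductive Infer (tyof : C → Ty B) : List (Ty B) → Tm C → Ty B → Prop
    | cst (Γ) (c : C) : Infer tyof Γ (.cst c) (tyof c)
    | var : Γ[n]? = some A → Infer tyof Γ (.var n) A
    | proj1 : Infer tyof Γ p (.prod A A') → Infer tyof Γ (.proj1 p) A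
    | proj2 : Infer tyof Γ p (.prod A A') → Infer tyof Γ (.proj2 p) A'
    | app : Infer tyof Γ t (.arr A A') → Check tyof Γ u A →
        Infer tyof Γ (.app t u) A'
end

/-- The substitution replacing the last variable by `inl` of itself
(used in the η-law for sums). -/
def inlSub : Nat → Tm C
  | 0 => .inl (.var 0)
  | n + 1 => .var (n + 1)

/-- The substitution replacing the last variable by `inr` of itself. -/
def inrSub : Nat → Tm C
  | 0 => .inr (.var 0)
  | n + 1 => .var (n + 1)

/-- Conversion `Γ ⊢ t ≡ u : A`: the least congruent equivalence relation on
well-typed terms containing the β and η laws for all type formers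
(the equational theory of bicartesian closed categories). -/
inductive Conv (tyof : C → Ty B) : List (Ty B) → Tm C → Tm C → Ty B → Prop
  | refl : HasType tyof Γ t A → Conv tyof Γ t t A
  | symm : Conv tyof Γ t u A → Conv tyof Γ u t A
  | trans : Conv tyof Γ t u A → Conv tyof Γ u v A → Conv tyof Γ t v A
  -- congruence
  | pair : Conv tyof Γ t t' A → Conv tyof Γ u u' A' →
      Conv tyof Γ (.pair t u) (.pair t' u') (.prod A A')
  | proj1 : Conv tyof Γ p p' (.prod A A') → Conv tyof Γ (.proj1 p) (.proj1 p') A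
  | proj2 : Conv tyof Γ p p' (.prod A A') → Conv tyof Γ (.proj2 p) (.proj2 p') A'
  | lam : Conv tyof (A :: Γ) t t' A' → Conv tyof Γ (.lam t) (.lam t') (.arr A A')
  | app : Conv tyof Γ t t' (.arr A A') → Conv tyof Γ u u' A →
      Conv tyof Γ (.app t u) (.app t' u') A'
  | inl : Conv tyof Γ a a' A → Conv tyof Γ (.inl a) (.inl a') (.sum A A')
  | inr : Conv tyof Γ b b' A' → Conv tyof Γ (.inr b) (.inr b') (.sum A A')
  | raise : Conv tyof Γ t t' .empty → Conv tyof Γ (.raise t) (.raise t') A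
  | case : Conv tyof Γ s s' (.sum A A') → Conv tyof (A :: Γ) bl bl' T →
      Conv tyof (A' :: Γ) br br' T →
      Conv tyof Γ (.case s bl br) (.case s' bl' br') T
  -- β laws
  | beta_proj1 : HasType tyof Γ t A → HasType tyof Γ u A' →
      Conv tyof Γ (.proj1 (.pair t u)) t A
  | beta_proj2 : HasType tyof Γ t A → HasType tyof Γ u A' →
      Conv tyof Γ (.proj2 (.pair t u)) u A'
  | beta_app : HasType tyof (A :: Γ) t A' → HasType tyof Γ u A →
      Conv tyof Γ (.app (.lam t) u) (subst (sub0 u) t) A'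
  | beta_inl : HasType tyof Γ a A → HasType tyof (A :: Γ) bl T →
      HasType tyof (A' :: Γ) br T →
      Conv tyof Γ (.case (.inl a) bl br) (subst (sub0 a) bl) T
  | beta_inr : HasType tyof Γ b A' → HasType tyof (A :: Γ) bl T →
      HasType tyof (A' :: Γ) br T →
      Conv tyof Γ (.case (.inr b) bl br) (subst (sub0 b) br) T
  -- η laws
  | eta_unit : HasType tyof Γ t .unit → Conv tyof Γ t .star .unit
  | eta_prod : HasType tyof Γ t (.prod A A') →
      Conv tyof Γ t (.pair (.proj1 t) (.proj2 t)) (.prod A A')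
  | eta_arr : HasType tyof Γ t (.arr A A') →
      Conv tyof Γ t (.lam (.app (rename Nat.succ t) (.var 0))) (.arr A A')
  | eta_empty : HasType tyof Γ s .empty → HasType tyof Γ u T →
      Conv tyof Γ u (.raise s) T
  | eta_sum : HasType tyof Γ s (.sum A A') → HasType tyof (.sum A A' :: Γ) u T →
      Conv tyof Γ (subst (sub0 s) u)
        (.case s (subst inlSub u) (subst inrSub u)) T

/-- `t` is covered by the predicate `F`: `t` is a case tree whose nodes are
eliminations of neutrals at positive types and whose leaves satisfy `F`
(in suitably extended contexts). -/
inductive Covered (tyof : C → Ty B) (F : List (Ty B) → Tm C → Prop) :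
    List (Ty B) → Tm C → Prop
  | leaf : F Γ t → Covered tyof F Γ t
  | raise : Infer tyof Γ n .empty → Covered tyof F Γ (.raise n)
  | case : Infer tyof Γ n (.sum A A') → Covered tyof F (A :: Γ) bl →
      Covered tyof F (A' :: Γ) br → Covered tyof F Γ (.case n bl br)

/-- `ρ` is a (typed) renaming from `Δ` to `Γ`. -/
def IsRen (ρ : Nat → Nat) (Δ Γ : List (Ty B)) : Prop :=
  ∀ n A, Γ[n]? = some A → Δ[ρ n]? = some A

/-- Values at a type, defined by induction on the type (logical relation). -/
def Value (tyof : C → Ty B) : Ty B → List (Ty B) → Tm C → Prop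
  | .base b => Covered tyof (fun Δ u => Infer tyof Δ u (.base b))
  | .empty => Covered tyof (fun Δ u => Infer tyof Δ u .empty)
  | .sum A A' => Covered tyof (fun Δ u =>
      Infer tyof Δ u (.sum A A') ∨
      (∃ a, u = .inl a ∧ Value tyof A Δ a) ∨
      (∃ b, u = .inr b ∧ Value tyof A' Δ b))
  | .unit => fun Γ t => Check tyof Γ t .unit
  | .prod A A' => fun Γ t => Check tyof Γ t (.prod A A') ∧
      (∃ v, Reds (.proj1 t) v ∧ Value tyof A Γ v) ∧
      (∃ v, Reds (.proj2 t) v ∧ Value tyof A' Γ v)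
  | .arr A A' => fun Γ t => Check tyof Γ t (.arr A A') ∧
      ∀ Δ ρ, IsRen ρ Δ Γ → ∀ u, Value tyof A Δ u →
        ∃ v, Reds (.app (rename ρ t) u) v ∧ Value tyof A' Δ v

/-- `t` is reducible at `T` in `Γ`: it reduces to a value at `T`. -/
def Reducible (tyof : C → Ty B) (T : Ty B) (Γ : List (Ty B)) (t : Tm C) : Prop :=
  ∃ v, Reds t v ∧ Value tyof T Γ v

/-- Polarised vocabulary of a type: `voc true A = A⁺`, `voc false A = A⁻`. -/
def voc (p : Bool) : Ty B → Set B
  | .base b => if p then {b} else ∅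
  | .unit => ∅
  | .empty => ∅
  | .prod A A' => voc p A ∪ voc p A'
  | .sum A A' => voc p A ∪ voc p A'
  | .arr A A' => voc (!p) A ∪ voc p A'

/-- Polarised vocabulary of a context. -/
def vocCtx (p : Bool) (Γ : List (Ty B)) : Set B :=
  {b | ∃ A ∈ Γ, b ∈ voc p A}

/-- Context partitions `Γ = Γs ⋈ Γt`. -/
inductive Splits {B : Type} : List (Ty B) → List (Ty B) → List (Ty B) → Type
  | nil : Splits [] [] []
  | left (A : Ty B) : Splits Γ Γs Γt → Splits (A :: Γ) (A :: Γs) Γt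
  | right (A : Ty B) : Splits Γ Γs Γt → Splits (A :: Γ) Γs (A :: Γt)

/-- The renaming embedding `Γs` into `Γ` induced by a partition. -/
def Splits.renS {B : Type} : {Γ Γs Γt : List (Ty B)} → Splits Γ Γs Γt → Nat → Nat
  | _, _, _, .nil => id
  | _, _, _, .left _ s => fun n => match n with | 0 => 0 | m + 1 => s.renS m + 1
  | _, _, _, .right _ s => fun n => s.renS n + 1

/-- The renaming embedding `Γt` into `Γ` induced by a partition. -/
def Splits.renT {B : Type} : {Γ Γs Γt : List (Ty B)} → Splits Γ Γs Γt → Nat → Nat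
  | _, _, _, .nil => id
  | _, _, _, .left _ s => fun n => s.renT n + 1
  | _, _, _, .right _ s => fun n => match n with | 0 => 0 | m + 1 => s.renT m + 1

/-- The composite `r[l..]` where `l` lives in one part of the context
(embedded via `ρl`) and the tail variables of `r` live in the other part
(embedded via `ρr`); the result lives in the full context. -/
def splice (ρl ρr : Nat → Nat) (l r : Tm C) : Tm C :=
  subst (fun n => match n with
    | 0 => rename ρl l
    | m + 1 => .var (ρr m)) r

/-- The (empty) constant-typing function for a language without constants. -/
def noCst {B : Type} : Empty → Ty B := fun c => c.elim

/-- The set of constants occurring in a term. -/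
def constsOf : Tm C → Set C
  | .cst c => {c}
  | .var _ => ∅
  | .star => ∅
  | .pair t u => constsOf t ∪ constsOf u
  | .proj1 t => constsOf t
  | .proj2 t => constsOf t
  | .lam t => constsOf t
  | .app t u => constsOf t ∪ constsOf u
  | .inl t => constsOf t
  | .inr t => constsOf t
  | .raise t => constsOf t
  | .case s bl br => constsOf s ∪ constsOf bl ∪ constsOf br


end STLCp

/-!
A β-step may duplicate cc-redexes, which the cc-side absorbs by taking several steps. A commuting
conversion `e[ite s b_l b_r] ⇝ ite s e[b_l] e[b_r]` in turn duplicates the β-redexes of `e`; this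
is absorbed by parallel β-reduction `⇒`, which satisfies `⇝_β ⊆ ⇒ ⊆ ⇝_β*`. So a `⇒`-step
`t ⇒ u` and a cc-step `t ⇝ u'` close as `u ⇝_cc* v`, `u' ⇒ v`, and two strip arguments give the
theorem. The only genuine overlap is a β-redex `ite (inl a) b_l b_r` under an elimination `e`: it
is fired in both copies of `e` at once, using `(e↑[b_l])[a..] = e[b_l[a..]]`.
-/

namespace Relation

variable {α : Type*} {r s p : α → α → Prop} {a b c : α}

theorem exists_reflTransGen_of_strip
    (strip : ∀ a b c, p a b → s a c → ∃ d, ReflTransGen s b d ∧ p c d)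
    (hab : p a b) (hac : ReflTransGen s a c) : ∃ d, ReflTransGen s b d ∧ p c d := by
  induction hac with
  | refl => exact ⟨b, .refl, hab⟩
  | tail _ hcc' ih =>
    obtain ⟨d, hbd, hcd⟩ := ih
    obtain ⟨d', hdd', hc'd'⟩ := strip _ _ _ hcd hcc'
    exact ⟨d', hbd.trans hdd', hc'd'⟩

theorem exists_reflTransGen_reflTransGen_of_strip (hrp : ∀ a b, r a b → p a b)
    (hpr : ∀ a b, p a b → ReflTransGen r a b)
    (strip : ∀ a b c, p a b → s a c → ∃ d, ReflTransGen s b d ∧ p c d)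
    (hab : ReflTransGen r a b) (hac : ReflTransGen s a c) :
    ∃ d, ReflTransGen s b d ∧ ReflTransGen r c d := by
  induction hab with
  | refl => exact ⟨c, hac, .refl⟩
  | tail _ hbb' ih =>
    obtain ⟨d, hbd, hcd⟩ := ih
    obtain ⟨d', hb'd', hdd'⟩ := exists_reflTransGen_of_strip strip (hrp _ _ hbb') hbd
    exact ⟨d', hb'd', hcd.trans (hpr _ _ hdd')⟩

end Relation

namespace STLCp

open Relation

variable {C : Type}

theorem rename_rename (ρ ρ' : ℕ → ℕ) (t : Tm C) :
    rename ρ (rename ρ' t) = rename (ρ ∘ ρ') t := by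
  have lift_comp (ρ ρ' : ℕ → ℕ) : liftRen ρ ∘ liftRen ρ' = liftRen (ρ ∘ ρ') := by
    funext n; cases n <;> rfl
  induction t generalizing ρ ρ' <;> simp [rename, *]

theorem subst_rename (σ : ℕ → Tm C) (ρ : ℕ → ℕ) (t : Tm C) :
    subst σ (rename ρ t) = subst (σ ∘ ρ) t := by
  have lift_comp (σ : ℕ → Tm C) (ρ : ℕ → ℕ) :
      liftSub σ ∘ liftRen ρ = liftSub (σ ∘ ρ) := by
    funext n; cases n <;> rfl
  induction t generalizing σ ρ <;> simp [rename, subst, *]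

theorem rename_subst (ρ : ℕ → ℕ) (σ : ℕ → Tm C) (t : Tm C) :
    rename ρ (subst σ t) = subst (rename ρ ∘ σ) t := by
  have lift_comp (ρ : ℕ → ℕ) (σ : ℕ → Tm C) :
      rename (liftRen ρ) ∘ liftSub σ = liftSub (rename ρ ∘ σ) := by
    funext n
    cases n with
    | zero => rfl
    | succ n => simp only [Function.comp, liftSub, rename_rename]; rfl
  induction t generalizing ρ σ <;> simp [rename, subst, *]

theorem subst_var (t : Tm C) : subst .var t = t := by
  have lift_var : liftSub (.var : ℕ → Tm C) = .var := by
    funext n; cases n <;> rfl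
  induction t <;> simp [subst, *]

theorem rename_eq_subst (ρ : ℕ → ℕ) (t : Tm C) : rename ρ t = subst (.var ∘ ρ) t := by
  rw [← subst_var (rename ρ t), subst_rename]

theorem subst_rename_of_leftInverse {σ : ℕ → Tm C} {ρ : ℕ → ℕ}
    (h : ∀ n, σ (ρ n) = .var n) (t : Tm C) : subst σ (rename ρ t) = t := by
  rw [subst_rename, show σ ∘ ρ = .var from funext h, subst_var]

theorem rename_subst_sub0 (ρ : ℕ → ℕ) (u t : Tm C) :
    rename ρ (subst (sub0 u) t) = subst (sub0 (rename ρ u)) (rename (liftRen ρ) t) := by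
  rw [rename_subst, subst_rename]
  congr 1
  funext n; cases n <;> rfl

def substElim (σ : ℕ → Tm C) : Elim C → Elim C
  | .eapp u => .eapp (subst σ u)
  | .eproj1 => .eproj1
  | .eproj2 => .eproj2
  | .ecase bl br => .ecase (subst (liftSub σ) bl) (subst (liftSub σ) br)

theorem subst_plug (σ : ℕ → Tm C) (e : Elim C) (t : Tm C) :
    subst σ (plug e t) = plug (substElim σ e) (subst σ t) := by
  cases e <;> rfl

theorem weakenElim_substElim (σ : ℕ → Tm C) (e : Elim C) :
    weakenElim (substElim σ e) = substElim (liftSub σ) (weakenElim e) := by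
  have lift_succ (t : Tm C) : rename .succ (subst σ t) = subst (liftSub σ) (rename .succ t) := by
    rw [rename_subst, subst_rename]; rfl
  have lift_lift (t : Tm C) : rename (liftRen .succ) (subst (liftSub σ) t) =
      subst (liftSub (liftSub σ)) (rename (liftRen .succ) t) := by
    rw [rename_subst, subst_rename]
    congr 1
    funext n
    cases n with
    | zero => rfl
    | succ n => simp only [Function.comp, liftSub, liftRen, rename_rename]; rfl
  cases e <;> simp only [weakenElim, substElim, lift_succ, lift_lift]

theorem subst_sub0_plug_weakenElim (a : Tm C) (e : Elim C) (t : Tm C) :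
    subst (sub0 a) (plug (weakenElim e) t) = plug e (subst (sub0 a) t) := by
  cases e <;> simp only [weakenElim, plug, subst]
  all_goals
    repeat rw [subst_rename_of_leftInverse (fun n => by cases n <;> rfl)]

def IsIntro : Tm C → Prop
  | .pair _ _ | .lam _ | .inl _ | .inr _ => True
  | _ => False

theorem not_ccBase_of_isIntro {t u : Tm C} (ht : IsIntro t) : ¬ CCBase t u := by
  rintro (⟨e, r⟩ | ⟨e, s, bl, br⟩) <;> cases e <;> exact ht

theorem ccBase_subst (σ : ℕ → Tm C) {t u : Tm C} (h : CCBase t u) :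
    CCBase (subst σ t) (subst σ u) := by
  cases h with
  | raise e r => rw [subst_plug]; exact .raise _ _
  | case e s bl br =>
    simpa only [subst_plug, subst, weakenElim_substElim] using
      CCBase.case (substElim σ e) (subst σ s) (subst (liftSub σ) bl) (subst (liftSub σ) br)

section Congruence

variable {R : Tm C → Tm C → Prop} {t t' u u' s s' : Tm C}

theorem reflTransGen_cong_pair (ht : ReflTransGen (Cong R) t t')
    (hu : ReflTransGen (Cong R) u u') : ReflTransGen (Cong R) (.pair t u) (.pair t' u') :=
  (ht.lift (Tm.pair · u) fun _ _ => Cong.pairL).trans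
    (hu.lift (Tm.pair t' ·) fun _ _ => Cong.pairR)

theorem reflTransGen_cong_proj1 (ht : ReflTransGen (Cong R) t t') :
    ReflTransGen (Cong R) (.proj1 t) (.proj1 t') :=
  ht.lift _ fun _ _ => .proj1

theorem reflTransGen_cong_proj2 (ht : ReflTransGen (Cong R) t t') :
    ReflTransGen (Cong R) (.proj2 t) (.proj2 t') :=
  ht.lift _ fun _ _ => .proj2

theorem reflTransGen_cong_lam (ht : ReflTransGen (Cong R) t t') :
    ReflTransGen (Cong R) (.lam t) (.lam t') :=
  ht.lift _ fun _ _ => .lam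

theorem reflTransGen_cong_app (ht : ReflTransGen (Cong R) t t')
    (hu : ReflTransGen (Cong R) u u') : ReflTransGen (Cong R) (.app t u) (.app t' u') :=
  (ht.lift (Tm.app · u) fun _ _ => Cong.appL).trans
    (hu.lift (Tm.app t' ·) fun _ _ => Cong.appR)

theorem reflTransGen_cong_inl (ht : ReflTransGen (Cong R) t t') :
    ReflTransGen (Cong R) (.inl t) (.inl t') :=
  ht.lift _ fun _ _ => .inl

theorem reflTransGen_cong_inr (ht : ReflTransGen (Cong R) t t') :
    ReflTransGen (Cong R) (.inr t) (.inr t') :=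
  ht.lift _ fun _ _ => .inr

theorem reflTransGen_cong_raise (ht : ReflTransGen (Cong R) t t') :
    ReflTransGen (Cong R) (.raise t) (.raise t') :=
  ht.lift _ fun _ _ => .raise

theorem reflTransGen_cong_case (hs : ReflTransGen (Cong R) s s')
    (ht : ReflTransGen (Cong R) t t') (hu : ReflTransGen (Cong R) u u') :
    ReflTransGen (Cong R) (.case s t u) (.case s' t' u') :=
  ((hs.lift (Tm.case · t u) fun _ _ => Cong.caseS).trans
    (ht.lift (Tm.case s' · u) fun _ _ => Cong.caseL)).trans
    (hu.lift (Tm.case s' t' ·) fun _ _ => Cong.caseR)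

theorem cong_subst (hR : ∀ σ t u, R t u → R (subst σ t) (subst σ u)) (σ : ℕ → Tm C)
    (h : Cong R t u) : Cong R (subst σ t) (subst σ u) := by
  induction h generalizing σ with
  | base h => exact .base (hR σ _ _ h)
  | pairL _ ih => exact .pairL (ih σ)
  | pairR _ ih => exact .pairR (ih σ)
  | proj1 _ ih => exact .proj1 (ih σ)
  | proj2 _ ih => exact .proj2 (ih σ)
  | lam _ ih => exact .lam (ih (liftSub σ))
  | appL _ ih => exact .appL (ih σ)
  | appR _ ih => exact .appR (ih σ)
  | inl _ ih => exact .inl (ih σ)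
  | inr _ ih => exact .inr (ih σ)
  | raise _ ih => exact .raise (ih σ)
  | caseS _ ih => exact .caseS (ih σ)
  | caseL _ ih => exact .caseL (ih (liftSub σ))
  | caseR _ ih => exact .caseR (ih (liftSub σ))

end Congruence

theorem redsCC_subst (σ : ℕ → Tm C) {t u : Tm C} (h : RedsCC t u) :
    RedsCC (subst σ t) (subst σ u) :=
  ReflTransGen.lift (subst σ) (fun _ _ => cong_subst (fun σ _ _ => ccBase_subst σ) σ) _ _ h

theorem redsCC_subst_of_forall {σ σ' : ℕ → Tm C} (h : ∀ n, RedsCC (σ n) (σ' n))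
    (t : Tm C) :
    RedsCC (subst σ t) (subst σ' t) := by
  have lift {σ σ' : ℕ → Tm C} (h : ∀ n, RedsCC (σ n) (σ' n)) (n : ℕ) :
      RedsCC (liftSub σ n) (liftSub σ' n) := by
    cases n with
    | zero => exact .refl
    | succ n => simpa only [liftSub, rename_eq_subst] using redsCC_subst _ (h n)
  induction t generalizing σ σ' with
  | cst | star => exact .refl
  | var n => exact h n
  | pair _ _ iht ihu => exact reflTransGen_cong_pair (iht h) (ihu h)
  | proj1 _ ih => exact reflTransGen_cong_proj1 (ih h)
  | proj2 _ ih => exact reflTransGen_cong_proj2 (ih h)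
  | lam _ ih => exact reflTransGen_cong_lam (ih (lift h))
  | app _ _ iht ihu => exact reflTransGen_cong_app (iht h) (ihu h)
  | inl _ ih => exact reflTransGen_cong_inl (ih h)
  | inr _ ih => exact reflTransGen_cong_inr (ih h)
  | raise _ ih => exact reflTransGen_cong_raise (ih h)
  | case _ _ _ ihs ihl ihr => exact reflTransGen_cong_case (ihs h) (ihl (lift h)) (ihr (lift h))

theorem redsCC_subst_sub0 {u u' : Tm C} (h : RedsCC u u') (t : Tm C) :
    RedsCC (subst (sub0 u) t) (subst (sub0 u') t) :=
  redsCC_subst_of_forall (fun n => by cases n; exacts [h, .refl]) t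

inductive ParBeta : Tm C → Tm C → Prop
  | cst (c : C) : ParBeta (.cst c) (.cst c)
  | var (n : ℕ) : ParBeta (.var n) (.var n)
  | star : ParBeta .star .star
  | pair : ParBeta t t' → ParBeta u u' → ParBeta (.pair t u) (.pair t' u')
  | proj1 : ParBeta t t' → ParBeta (.proj1 t) (.proj1 t')
  | proj2 : ParBeta t t' → ParBeta (.proj2 t) (.proj2 t')
  | lam : ParBeta t t' → ParBeta (.lam t) (.lam t')
  | app : ParBeta t t' → ParBeta u u' → ParBeta (.app t u) (.app t' u')
  | inl : ParBeta t t' → ParBeta (.inl t) (.inl t')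
  | inr : ParBeta t t' → ParBeta (.inr t) (.inr t')
  | raise : ParBeta t t' → ParBeta (.raise t) (.raise t')
  | case : ParBeta s s' → ParBeta bl bl' → ParBeta br br' →
      ParBeta (.case s bl br) (.case s' bl' br')
  | beta1 : ParBeta t t' → ParBeta (.proj1 (.pair t u)) t'
  | beta2 : ParBeta u u' → ParBeta (.proj2 (.pair t u)) u'
  | betaApp : ParBeta t t' → ParBeta u u' → ParBeta (.app (.lam t) u) (subst (sub0 u') t')
  | betaInl : ParBeta a a' → ParBeta bl bl' →
      ParBeta (.case (.inl a) bl br) (subst (sub0 a') bl')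
  | betaInr : ParBeta b b' → ParBeta br br' →
      ParBeta (.case (.inr b) bl br) (subst (sub0 b') br')

namespace ParBeta

theorem refl : ∀ t : Tm C, ParBeta t t
  | .cst c => .cst c
  | .var n => .var n
  | .star => .star
  | .pair t u => .pair (refl t) (refl u)
  | .proj1 t => .proj1 (refl t)
  | .proj2 t => .proj2 (refl t)
  | .lam t => .lam (refl t)
  | .app t u => .app (refl t) (refl u)
  | .inl t => .inl (refl t)
  | .inr t => .inr (refl t)
  | .raise t => .raise (refl t)
  | .case s bl br => .case (refl s) (refl bl) (refl br)

theorem rename {t u : Tm C} (h : ParBeta t u) (ρ : ℕ → ℕ) :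
    ParBeta (rename ρ t) (rename ρ u) := by
  induction h generalizing ρ with
  | cst c => exact .cst c
  | var n => exact .var _
  | star => exact .star
  | pair _ _ iht ihu => exact .pair (iht ρ) (ihu ρ)
  | proj1 _ ih => exact .proj1 (ih ρ)
  | proj2 _ ih => exact .proj2 (ih ρ)
  | lam _ ih => exact .lam (ih (liftRen ρ))
  | app _ _ iht ihu => exact .app (iht ρ) (ihu ρ)
  | inl _ ih => exact .inl (ih ρ)
  | inr _ ih => exact .inr (ih ρ)
  | raise _ ih => exact .raise (ih ρ)
  | case _ _ _ ihs ihl ihr => exact .case (ihs ρ) (ihl (liftRen ρ)) (ihr (liftRen ρ))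
  | beta1 _ ih => exact .beta1 (ih ρ)
  | beta2 _ ih => exact .beta2 (ih ρ)
  | betaApp _ _ iht ihu =>
    rw [rename_subst_sub0]; exact .betaApp (iht (liftRen ρ)) (ihu ρ)
  | betaInl _ _ iha ihl =>
    rw [rename_subst_sub0]; exact .betaInl (iha ρ) (ihl (liftRen ρ))
  | betaInr _ _ ihb ihr =>
    rw [rename_subst_sub0]; exact .betaInr (ihb ρ) (ihr (liftRen ρ))

theorem of_stepBeta {t u : Tm C} (h : StepBeta t u) : ParBeta t u := by
  induction h with
  | base h =>
    cases h
    exacts [.beta1 (refl _), .beta2 (refl _), .betaApp (refl _) (refl _),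
      .betaInl (refl _) (refl _), .betaInr (refl _) (refl _)]
  | pairL _ ih => exact .pair ih (refl _)
  | pairR _ ih => exact .pair (refl _) ih
  | proj1 _ ih => exact .proj1 ih
  | proj2 _ ih => exact .proj2 ih
  | lam _ ih => exact .lam ih
  | appL _ ih => exact .app ih (refl _)
  | appR _ ih => exact .app (refl _) ih
  | inl _ ih => exact .inl ih
  | inr _ ih => exact .inr ih
  | raise _ ih => exact .raise ih
  | caseS _ ih => exact .case ih (refl _) (refl _)
  | caseL _ ih => exact .case (refl _) ih (refl _)
  | caseR _ ih => exact .case (refl _) (refl _) ih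

theorem redsBeta {t u : Tm C} (h : ParBeta t u) : RedsBeta t u := by
  induction h with
  | cst | var | star => exact .refl
  | pair _ _ iht ihu => exact reflTransGen_cong_pair iht ihu
  | proj1 _ ih => exact reflTransGen_cong_proj1 ih
  | proj2 _ ih => exact reflTransGen_cong_proj2 ih
  | lam _ ih => exact reflTransGen_cong_lam ih
  | app _ _ iht ihu => exact reflTransGen_cong_app iht ihu
  | inl _ ih => exact reflTransGen_cong_inl ih
  | inr _ ih => exact reflTransGen_cong_inr ih
  | raise _ ih => exact reflTransGen_cong_raise ih
  | case _ _ _ ihs ihl ihr => exact reflTransGen_cong_case ihs ihl ihr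
  | beta1 _ ih =>
    exact (reflTransGen_cong_proj1 (reflTransGen_cong_pair ih .refl)).tail (.base (.proj1 _ _))
  | beta2 _ ih =>
    exact (reflTransGen_cong_proj2 (reflTransGen_cong_pair .refl ih)).tail (.base (.proj2 _ _))
  | betaApp _ _ iht ihu =>
    exact (reflTransGen_cong_app (reflTransGen_cong_lam iht) ihu).tail (.base (.app _ _))
  | betaInl _ _ iha ihl =>
    exact (reflTransGen_cong_case (reflTransGen_cong_inl iha) ihl .refl).tail
      (.base (.case_inl _ _ _))
  | betaInr _ _ ihb ihr =>
    exact (reflTransGen_cong_case (reflTransGen_cong_inr ihb) .refl ihr).tail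
      (.base (.case_inr _ _ _))

end ParBeta

inductive ParBetaElim : Elim C → Elim C → Prop
  | eapp : ParBeta u u' → ParBetaElim (.eapp u) (.eapp u')
  | eproj1 : ParBetaElim .eproj1 .eproj1
  | eproj2 : ParBetaElim .eproj2 .eproj2
  | ecase : ParBeta bl bl' → ParBeta br br' → ParBetaElim (.ecase bl br) (.ecase bl' br')

theorem parBeta_plug {e e' : Elim C} {t t' : Tm C} (he : ParBetaElim e e') (ht : ParBeta t t') :
    ParBeta (plug e t) (plug e' t') := by
  cases he with
  | eapp hu => exact .app ht hu
  | eproj1 => exact .proj1 ht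
  | eproj2 => exact .proj2 ht
  | ecase hl hr => exact .case ht hl hr

theorem ParBetaElim.weakenElim {e e' : Elim C} (he : ParBetaElim e e') :
    ParBetaElim (weakenElim e) (weakenElim e') := by
  cases he with
  | eapp hu => exact .eapp (hu.rename _)
  | eproj1 => exact .eproj1
  | eproj2 => exact .eproj2
  | ecase hl hr => exact .ecase (hl.rename _) (hr.rename _)

theorem parBeta_plug_inv {e : Elim C} {t u : Tm C} (h : ParBeta (plug e t) u) (ht : ¬ IsIntro t) :
    ∃ e' t', ParBetaElim e e' ∧ ParBeta t t' ∧ u = plug e' t' := by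
  cases e with
  | eapp w =>
    cases h with
    | app ht' hw => exact ⟨_, _, .eapp hw, ht', rfl⟩
    | betaApp => exact absurd trivial ht
  | eproj1 =>
    cases h with
    | proj1 ht' => exact ⟨_, _, .eproj1, ht', rfl⟩
    | beta1 => exact absurd trivial ht
  | eproj2 =>
    cases h with
    | proj2 ht' => exact ⟨_, _, .eproj2, ht', rfl⟩
    | beta2 => exact absurd trivial ht
  | ecase bl br =>
    cases h with
    | case ht' hl hr => exact ⟨_, _, .ecase hl hr, ht', rfl⟩
    | betaInl | betaInr => exact absurd trivial ht

theorem parBeta_ccBase {t u u' : Tm C} (hp : ParBeta t u) (hc : CCBase t u') :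
    ∃ v, RedsCC u v ∧ ParBeta u' v := by
  cases hc with
  | raise e r =>
    obtain ⟨e', _, -, hr, rfl⟩ := parBeta_plug_inv hp not_false
    cases hr with
    | raise hr => exact ⟨_, .single (.base (.raise e' _)), .raise hr⟩
  | case e s bl br =>
    obtain ⟨e', _, he, hs, rfl⟩ := parBeta_plug_inv hp not_false
    cases hs with
    | case hs hl hr =>
      exact ⟨_, .single (.base (.case e' _ _ _)),
        .case hs (parBeta_plug he.weakenElim hl) (parBeta_plug he.weakenElim hr)⟩
    | betaInl ha hl =>
      refine ⟨_, .refl, ?_⟩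
      rw [← subst_sub0_plug_weakenElim]
      exact .betaInl ha (parBeta_plug he.weakenElim hl)
    | betaInr hb hr =>
      refine ⟨_, .refl, ?_⟩
      rw [← subst_sub0_plug_weakenElim]
      exact .betaInr hb (parBeta_plug he.weakenElim hr)

def JoinsCC (t u : Tm C) : Prop :=
  ∀ u', StepCC t u' → ∃ v, RedsCC u v ∧ ParBeta u' v

namespace JoinsCC

variable {t t' u u' s s' bl bl' br br' : Tm C}

theorem pair (ht : ParBeta t t') (hu : ParBeta u u') (iht : JoinsCC t t') (ihu : JoinsCC u u') :
    JoinsCC (.pair t u) (.pair t' u') := by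
  intro _ hc
  cases hc with
  | base hb => exact parBeta_ccBase (.pair ht hu) hb
  | pairL hc =>
    obtain ⟨v, hv, hpv⟩ := iht _ hc
    exact ⟨_, reflTransGen_cong_pair hv .refl, .pair hpv hu⟩
  | pairR hc =>
    obtain ⟨v, hv, hpv⟩ := ihu _ hc
    exact ⟨_, reflTransGen_cong_pair .refl hv, .pair ht hpv⟩

theorem proj1 (ht : ParBeta t t') (iht : JoinsCC t t') : JoinsCC (.proj1 t) (.proj1 t') := by
  intro _ hc
  cases hc with
  | base hb => exact parBeta_ccBase (.proj1 ht) hb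
  | proj1 hc =>
    obtain ⟨v, hv, hpv⟩ := iht _ hc
    exact ⟨_, reflTransGen_cong_proj1 hv, .proj1 hpv⟩

theorem proj2 (ht : ParBeta t t') (iht : JoinsCC t t') : JoinsCC (.proj2 t) (.proj2 t') := by
  intro _ hc
  cases hc with
  | base hb => exact parBeta_ccBase (.proj2 ht) hb
  | proj2 hc =>
    obtain ⟨v, hv, hpv⟩ := iht _ hc
    exact ⟨_, reflTransGen_cong_proj2 hv, .proj2 hpv⟩

theorem lam (ht : ParBeta t t') (iht : JoinsCC t t') : JoinsCC (.lam t) (.lam t') := by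
  intro _ hc
  cases hc with
  | base hb => exact parBeta_ccBase (.lam ht) hb
  | lam hc =>
    obtain ⟨v, hv, hpv⟩ := iht _ hc
    exact ⟨_, reflTransGen_cong_lam hv, .lam hpv⟩

theorem inl (ht : ParBeta t t') (iht : JoinsCC t t') : JoinsCC (.inl t) (.inl t') := by
  intro _ hc
  cases hc with
  | base hb => exact parBeta_ccBase (.inl ht) hb
  | inl hc =>
    obtain ⟨v, hv, hpv⟩ := iht _ hc
    exact ⟨_, reflTransGen_cong_inl hv, .inl hpv⟩

theorem inr (ht : ParBeta t t') (iht : JoinsCC t t') : JoinsCC (.inr t) (.inr t') := by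
  intro _ hc
  cases hc with
  | base hb => exact parBeta_ccBase (.inr ht) hb
  | inr hc =>
    obtain ⟨v, hv, hpv⟩ := iht _ hc
    exact ⟨_, reflTransGen_cong_inr hv, .inr hpv⟩

theorem raise (ht : ParBeta t t') (iht : JoinsCC t t') : JoinsCC (.raise t) (.raise t') := by
  intro _ hc
  cases hc with
  | base hb => exact parBeta_ccBase (.raise ht) hb
  | raise hc =>
    obtain ⟨v, hv, hpv⟩ := iht _ hc
    exact ⟨_, reflTransGen_cong_raise hv, .raise hpv⟩

theorem app (ht : ParBeta t t') (hu : ParBeta u u') (iht : JoinsCC t t') (ihu : JoinsCC u u') :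
    JoinsCC (.app t u) (.app t' u') := by
  intro _ hc
  cases hc with
  | base hb => exact parBeta_ccBase (.app ht hu) hb
  | appL hc =>
    obtain ⟨v, hv, hpv⟩ := iht _ hc
    exact ⟨_, reflTransGen_cong_app hv .refl, .app hpv hu⟩
  | appR hc =>
    obtain ⟨v, hv, hpv⟩ := ihu _ hc
    exact ⟨_, reflTransGen_cong_app .refl hv, .app ht hpv⟩

theorem case (hs : ParBeta s s') (hl : ParBeta bl bl') (hr : ParBeta br br') (ihs : JoinsCC s s')
    (ihl : JoinsCC bl bl') (ihr : JoinsCC br br') :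
    JoinsCC (.case s bl br) (.case s' bl' br') := by
  intro _ hc
  cases hc with
  | base hb => exact parBeta_ccBase (.case hs hl hr) hb
  | caseS hc =>
    obtain ⟨v, hv, hpv⟩ := ihs _ hc
    exact ⟨_, reflTransGen_cong_case hv .refl .refl, .case hpv hl hr⟩
  | caseL hc =>
    obtain ⟨v, hv, hpv⟩ := ihl _ hc
    exact ⟨_, reflTransGen_cong_case .refl hv .refl, .case hs hpv hr⟩
  | caseR hc =>
    obtain ⟨v, hv, hpv⟩ := ihr _ hc
    exact ⟨_, reflTransGen_cong_case .refl .refl hv, .case hs hl hpv⟩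

theorem beta1 (ht : ParBeta t t') (iht : JoinsCC t t') : JoinsCC (.proj1 (.pair t u)) t' := by
  intro _ hc
  cases hc with
  | base hb => exact parBeta_ccBase (.beta1 ht) hb
  | proj1 hc =>
    cases hc with
    | base hb => exact absurd hb (not_ccBase_of_isIntro trivial)
    | pairL hc =>
      obtain ⟨v, hv, hpv⟩ := iht _ hc
      exact ⟨v, hv, .beta1 hpv⟩
    | pairR _ => exact ⟨t', .refl, .beta1 ht⟩

theorem beta2 (hu : ParBeta u u') (ihu : JoinsCC u u') : JoinsCC (.proj2 (.pair t u)) u' := by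
  intro _ hc
  cases hc with
  | base hb => exact parBeta_ccBase (.beta2 hu) hb
  | proj2 hc =>
    cases hc with
    | base hb => exact absurd hb (not_ccBase_of_isIntro trivial)
    | pairL _ => exact ⟨u', .refl, .beta2 hu⟩
    | pairR hc =>
      obtain ⟨v, hv, hpv⟩ := ihu _ hc
      exact ⟨v, hv, .beta2 hpv⟩

theorem betaApp (ht : ParBeta t t') (hu : ParBeta u u') (iht : JoinsCC t t') (ihu : JoinsCC u u') :
    JoinsCC (.app (.lam t) u) (subst (sub0 u') t') := by
  intro _ hc
  cases hc with
  | base hb => exact parBeta_ccBase (.betaApp ht hu) hb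
  | appL hc =>
    cases hc with
    | base hb => exact absurd hb (not_ccBase_of_isIntro trivial)
    | lam hc =>
      obtain ⟨v, hv, hpv⟩ := iht _ hc
      exact ⟨_, redsCC_subst _ hv, .betaApp hpv hu⟩
  | appR hc =>
    obtain ⟨v, hv, hpv⟩ := ihu _ hc
    exact ⟨_, redsCC_subst_sub0 hv _, .betaApp ht hpv⟩

theorem betaInl (hs : ParBeta s s') (hl : ParBeta bl bl') (ihs : JoinsCC s s')
    (ihl : JoinsCC bl bl') :
    JoinsCC (.case (.inl s) bl br) (subst (sub0 s') bl') := by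
  intro _ hc
  cases hc with
  | base hb => exact parBeta_ccBase (.betaInl hs hl) hb
  | caseS hc =>
    cases hc with
    | base hb => exact absurd hb (not_ccBase_of_isIntro trivial)
    | inl hc =>
      obtain ⟨v, hv, hpv⟩ := ihs _ hc
      exact ⟨_, redsCC_subst_sub0 hv _, .betaInl hpv hl⟩
  | caseL hc =>
    obtain ⟨v, hv, hpv⟩ := ihl _ hc
    exact ⟨_, redsCC_subst _ hv, .betaInl hs hpv⟩
  | caseR _ => exact ⟨_, .refl, .betaInl hs hl⟩

theorem betaInr (hs : ParBeta s s') (hr : ParBeta br br') (ihs : JoinsCC s s')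
    (ihr : JoinsCC br br') :
    JoinsCC (.case (.inr s) bl br) (subst (sub0 s') br') := by
  intro _ hc
  cases hc with
  | base hb => exact parBeta_ccBase (.betaInr hs hr) hb
  | caseS hc =>
    cases hc with
    | base hb => exact absurd hb (not_ccBase_of_isIntro trivial)
    | inr hc =>
      obtain ⟨v, hv, hpv⟩ := ihs _ hc
      exact ⟨_, redsCC_subst_sub0 hv _, .betaInr hpv hr⟩
  | caseL _ => exact ⟨_, .refl, .betaInr hs hr⟩
  | caseR hc =>
    obtain ⟨v, hv, hpv⟩ := ihr _ hc
    exact ⟨_, redsCC_subst _ hv, .betaInr hs hpv⟩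

end JoinsCC

theorem ParBeta.joinsCC {t u : Tm C} (h : ParBeta t u) : JoinsCC t u := by
  induction h with
  | cst c => exact fun _ hc => by cases hc with | base hb => exact parBeta_ccBase (.cst c) hb
  | var n => exact fun _ hc => by cases hc with | base hb => exact parBeta_ccBase (.var n) hb
  | star => exact fun _ hc => by cases hc with | base hb => exact parBeta_ccBase .star hb
  | pair ht hu iht ihu => exact .pair ht hu iht ihu
  | proj1 ht iht => exact .proj1 ht iht
  | proj2 ht iht => exact .proj2 ht iht
  | lam ht iht => exact .lam ht iht
  | app ht hu iht ihu => exact .app ht hu iht ihu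
  | inl ht iht => exact .inl ht iht
  | inr ht iht => exact .inr ht iht
  | raise ht iht => exact .raise ht iht
  | case hs hl hr ihs ihl ihr => exact .case hs hl hr ihs ihl ihr
  | beta1 ht iht => exact .beta1 ht iht
  | beta2 hu ihu => exact .beta2 hu ihu
  | betaApp ht hu iht ihu => exact .betaApp ht hu iht ihu
  | betaInl hs hl ihs ihl => exact .betaInl hs hl ihs ihl
  | betaInr hs hr ihs ihr => exact .betaInr hs hr ihs ihr

/-- **Commutation of β-reduction and commuting conversions.** -/
theorem beta_cc_commute {C : Type} (t u u' : Tm C)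
    (hb : RedsBeta t u) (hc : RedsCC t u') :
    ∃ v : Tm C, RedsCC u v ∧ RedsBeta u' v :=
  exists_reflTransGen_reflTransGen_of_strip (fun _ _ => ParBeta.of_stepBeta)
    (fun _ _ => ParBeta.redsBeta) (fun _ _ c hp => hp.joinsCC c) hb hc

end STLCp
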